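/- arXiv:2210.17374 — 2 statements merged into one kernel-verified Lean document; each statement's English description precedes it below -/
import Mathlib

section
/- For the operators ∂₂ = ∂/∂p₁ and D acting on the polynomial ring Λ = ℚ[p₁, p₃, p₅, …], where 2D = -∂/∂p₁ + Σ_{ℓ₁,ℓ₂ ≥ 1 odd} (ℓ₁+ℓ₂) p_{ℓ₁+ℓ₂-1} ∂²/(∂p_{ℓ₁}∂p_{ℓ₂}), the commutator satisfies [∂₂, D] = ∂₂². -/
/-!
Write `2D = -∂₀ + Q` with `Q = Σ_{a,b} (2a+2b+2) X_{a+b} ∂_a ∂_b`. Partial derivatives commute,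
so `[∂₀, Q] = Σ_{a,b} (2a+2b+2) (∂₀ X_{a+b}) ∂_a ∂_b`, and `∂₀ X_{a+b}` vanishes unless
`a = b = 0`, where the weight is `2`. Hence `[∂₀, 2D] = 2 ∂₀²`.
-/

open MvPolynomial

/-- The symmetric algebra `Λ = ℚ[p₁, p₃, p₅, …]`, with variable `n` representing
the power sum `p_{2n+1}` (so variable `0` is `p₁`). -/
noncomputable abbrev Lam : Type := MvPolynomial ℕ ℚ

/-- The operator `∂₂ = ∂/∂p₁`. -/
noncomputable def del2 (f : Lam) : Lam := pderiv 0 f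

/-- The operator `D` with
`2D = -∂/∂p₁ + Σ_{ℓ₁,ℓ₂ ≥ 1 odd} (ℓ₁+ℓ₂) p_{ℓ₁+ℓ₂-1} ∂²/(∂p_{ℓ₁}∂p_{ℓ₂})`.
In the indexing `p_{2a+1} = X a` the term `(ℓ₁,ℓ₂) = (2a+1,2b+1)` contributes
`(2a+2b+2) · X (a+b) · ∂²/(∂X_a ∂X_b)`.  Only variables occurring in `f`
contribute, so the a priori infinite sum is the finite sum over `f.vars`. -/
noncomputable def Dop (f : Lam) : Lam :=
  (1 / 2 : ℚ) • (-(pderiv 0 f) +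
    ∑ a ∈ f.vars, ∑ b ∈ f.vars,
      ((2 * a + 1 + (2 * b + 1) : ℕ) : ℚ) • (X (a + b) * pderiv a (pderiv b f)))

namespace MvPolynomial

variable {σ R : Type*} [CommRing R]

theorem pderiv_pderiv_comm (i j : σ) (f : MvPolynomial σ R) :
    pderiv i (pderiv j f) = pderiv j (pderiv i f) := by
  have hbracket : ⁅pderiv i, pderiv j⁆ = (0 : Derivation R (MvPolynomial σ R) _) :=
    derivation_ext fun k => by
      classical
      rw [Derivation.commutator_apply, pderiv_X, pderiv_X, Pi.single_apply, Pi.single_apply]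
      split_ifs <;> simp
  simpa [Derivation.commutator_apply, sub_eq_zero] using congr($hbracket f)

theorem pderiv_X_mul_pderiv_pderiv_sub (i j a b : σ) (f : MvPolynomial σ R) :
    pderiv i (X j * pderiv a (pderiv b f)) - X j * pderiv a (pderiv b (pderiv i f)) =
      pderiv i (X j) * pderiv a (pderiv b f) := by
  rw [pderiv_mul, pderiv_pderiv_comm i a, pderiv_pderiv_comm i b, add_sub_cancel_right]

end MvPolynomial

section QuadPart

variable {R : Type*} [CommRing R]

/-- The second-order part of `2D`, with the double sum restricted to `S`. -/
noncomputable def quadPart (S : Finset ℕ) (f : MvPolynomial ℕ R) : MvPolynomial ℕ R :=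
  ∑ a ∈ S, ∑ b ∈ S,
    ((2 * a + 1 + (2 * b + 1) : ℕ) : R) • (X (a + b) * pderiv a (pderiv b f))

theorem quadPart_eq_of_vars_subset {S : Finset ℕ} {f : MvPolynomial ℕ R} (hS : f.vars ⊆ S) :
    quadPart S f = quadPart f.vars f := by
  refine (Finset.sum_subset hS fun a _ ha => Finset.sum_eq_zero fun b _ => ?_).symm.trans
    (Finset.sum_congr rfl fun a _ => (Finset.sum_subset hS fun b _ hb => ?_).symm)
  · rw [pderiv_pderiv_comm, pderiv_eq_zero_of_notMem_vars ha, map_zero, mul_zero, smul_zero]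
  · rw [pderiv_eq_zero_of_notMem_vars hb, map_zero, mul_zero, smul_zero]

theorem pderiv_zero_quadPart_sub {S : Finset ℕ} (h0 : 0 ∈ S) (f : MvPolynomial ℕ R) :
    pderiv 0 (quadPart S f) - quadPart S (pderiv 0 f) = (2 : R) • pderiv 0 (pderiv 0 f) := by
  simp only [quadPart, map_sum, Derivation.map_smul, ← Finset.sum_sub_distrib, ← smul_sub,
    pderiv_X_mul_pderiv_pderiv_sub]
  rw [Finset.sum_eq_single_of_mem 0 h0, Finset.sum_eq_single_of_mem 0 h0]
  · norm_num
  · intro b _ hb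
    rw [pderiv_X_of_ne (by simpa using hb), zero_mul, smul_zero]
  · intro a _ ha
    refine Finset.sum_eq_zero fun b _ => ?_
    rw [pderiv_X_of_ne (by omega), zero_mul, smul_zero]

end QuadPart

theorem Dop_eq_of_vars_subset {S : Finset ℕ} {f : Lam} (hS : f.vars ⊆ S) :
    Dop f = (1 / 2 : ℚ) • (-(pderiv 0 f) + quadPart S f) := by
  rw [quadPart_eq_of_vars_subset hS]
  rfl

/-- the commutator `[∂₂, D] = ∂₂²` on `Λ`. -/
theorem commutator_del2_Dop (f : Lam) :
    del2 (Dop f) - Dop (del2 f) = del2 (del2 f) := by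
  classical
  set S := insert 0 (f.vars ∪ (pderiv 0 f).vars)
  unfold del2
  rw [Dop_eq_of_vars_subset (S := S) (by intro; simp_all [S]),
    Dop_eq_of_vars_subset (S := S) (by intro; simp_all [S])]
  simp only [Derivation.map_smul, map_add, map_neg]
  rw [← smul_sub, add_sub_add_left_eq_sub, pderiv_zero_quadPart_sub (by simp [S]), smul_smul]
  norm_num
end

section
/- Let ∂₂ and D be linear operators with [∂₂, D] = ∂₂², acting locally nilpotently so that e^D = Σ_{i≥0} D^i/i! and Σ_{j≥1} ∂₂^j are well-defined on each element. Then ∂₂ ∘ e^D(f) = e^D( Σ_{j≥1} ∂₂^j(f) ) for all f. -/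
private lemma pow_apply_zero_of_le {V : Type*} [AddCommGroup V] [Module ℚ V]
    {B : Module.End ℚ V} {v : V} {n : ℕ} (h : (B ^ n) v = 0) {m : ℕ} (hm : n ≤ m) :
    (B ^ m) v = 0 := by
  obtain ⟨k, rfl⟩ := Nat.exists_eq_add_of_le hm
  rw [add_comm, pow_add, Module.End.mul_apply, h, map_zero]

private lemma aux1 {V : Type*} [AddCommGroup V] [Module ℚ V]
    {A D : Module.End ℚ V} (h : A * D - D * A = A ^ 2) (m : ℕ) :
    A ^ m * D = D * A ^ m + (m : ℚ) • A ^ (m + 1) := by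
  have hAD : A * D = D * A + A ^ 2 := by rw [← h]; abel
  induction m with
  | zero => simp
  | succ m ih =>
    have h1 : A ^ (m + 1) * D = A * (A ^ m * D) := by rw [pow_succ', mul_assoc]
    rw [h1, ih, mul_add, mul_smul_comm, ← mul_assoc, hAD, add_mul]
    have h2 : D * A * A ^ m = D * A ^ (m + 1) := by rw [mul_assoc, ← pow_succ']
    have h3 : A ^ 2 * A ^ m = A ^ (m + 2) := by rw [← pow_add]; ring_nf
    have h4 : A * A ^ (m + 1) = A ^ (m + 2) := by rw [← pow_succ']
    rw [h2, h3, h4]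
    push_cast
    module

private lemma aux2 {V : Type*} [AddCommGroup V] [Module ℚ V]
    {A D : Module.End ℚ V} (h : A * D - D * A = A ^ 2) (n : ℕ) :
    A * D ^ n = ∑ k ∈ Finset.range (n + 1),
      ((n.choose k * k.factorial : ℕ) : ℚ) • (D ^ (n - k) * A ^ (k + 1)) := by
  induction n with
  | zero => simp
  | succ n ih =>
    have step : A * D ^ (n + 1) = (A * D ^ n) * D := by rw [mul_assoc, ← pow_succ]
    rw [step, ih, Finset.sum_mul]
    set t : ℕ → Module.End ℚ V := fun k => D ^ (n + 1 - k) * A ^ (k + 1) with ht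
    have hterm : ∀ k ∈ Finset.range (n + 1),
        (((n.choose k * k.factorial : ℕ) : ℚ) • (D ^ (n - k) * A ^ (k + 1))) * D
          = ((n.choose k * k.factorial : ℕ) : ℚ) • t k
            + ((n.choose k * (k + 1).factorial : ℕ) : ℚ) • t (k + 1) := by
      intro k hk
      rw [Finset.mem_range] at hk
      rw [smul_mul_assoc, mul_assoc, aux1 h (k + 1), mul_add, mul_smul_comm, smul_add]
      congr 1
      · have e1 : n + 1 - k = (n - k) + 1 := by omega
        simp only [ht, e1, pow_succ, mul_assoc]
      · have e2 : n + 1 - (k + 1) = n - k := by omega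
        simp only [ht, e2, smul_smul]
        congr 1
        push_cast [Nat.factorial_succ]
        ring
    rw [Finset.sum_congr rfl hterm, Finset.sum_add_distrib]
    have hL : ∑ k ∈ Finset.range (n + 1 + 1), ((n.choose k * k.factorial : ℕ) : ℚ) • t k
        = ∑ k ∈ Finset.range (n + 1), ((n.choose k * k.factorial : ℕ) : ℚ) • t k := by
      rw [Finset.sum_range_succ]
      simp [Nat.choose_succ_self]
    have hsplit : ∀ x ∈ Finset.range (n + 1),
        (((n + 1).choose (x + 1) * (x + 1).factorial : ℕ) : ℚ) • t (x + 1)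
          = ((n.choose x * (x + 1).factorial : ℕ) : ℚ) • t (x + 1)
            + ((n.choose (x + 1) * (x + 1).factorial : ℕ) : ℚ) • t (x + 1) := by
      intro x _
      rw [Nat.choose_succ_succ]
      push_cast
      rw [add_mul, add_smul]
    rw [Finset.sum_range_succ' (fun k => (((n + 1).choose k * k.factorial : ℕ) : ℚ) • t k) (n + 1),
      Finset.sum_congr rfl hsplit, Finset.sum_add_distrib, ← hL,
      Finset.sum_range_succ' (fun k => ((n.choose k * k.factorial : ℕ) : ℚ) • t k) (n + 1),
      Finset.sum_range_succ]
    simp only [Nat.choose_succ_self, Nat.choose_zero_right, Nat.factorial_zero, mul_one, one_mul,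
      Nat.cast_one, one_smul, Nat.cast_zero, zero_mul, Nat.cast_ofNat, zero_smul, add_zero,
      Nat.cast_mul]
    abel


/-- if `[∂₂, D] = ∂₂²` for locally nilpotent linear operators on a
`ℚ`-vector space, so that `e^D = Σ_{i≥0} D^i/i!` and `Σ_{j≥1} ∂₂^j` are (finite,
hence) well-defined on each element, then `∂₂ ∘ e^D(f) = e^D(Σ_{j≥1} ∂₂^j(f))`:
there is a bound `N` beyond which all truncations of both sides agree. -/
theorem del2_comp_expD (V : Type*) [AddCommGroup V] [Module ℚ V]
    (A D : Module.End ℚ V) (h : A * D - D * A = A ^ 2)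
    (hD : ∀ v : V, ∃ n : ℕ, (D ^ n) v = 0)
    (hA : ∀ v : V, ∃ n : ℕ, (A ^ n) v = 0)
    (f : V) :
    ∃ N : ℕ, ∀ M : ℕ, N ≤ M →
      A (∑ i ∈ Finset.range M, ((i.factorial : ℚ)⁻¹) • (D ^ i) f)
        = ∑ i ∈ Finset.range M, ((i.factorial : ℚ)⁻¹) •
            (D ^ i) (∑ j ∈ Finset.Icc 1 M, (A ^ j) f) := by
  obtain ⟨K, hK⟩ := hA f
  choose nL hnL using fun k : ℕ => hD ((A ^ (k + 1)) f)
  set L := (Finset.range K).sup nL with hLdef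
  refine ⟨K + L, fun M hM => ?_⟩
  set T : ℕ → ℕ → V := fun m k => ((m.factorial : ℚ)⁻¹) • (D ^ m) ((A ^ (k + 1)) f) with hT
  have hTk : ∀ m k : ℕ, K ≤ k + 1 → T m k = 0 := by
    intro m k hk
    have hz : (A ^ (k + 1)) f = 0 := pow_apply_zero_of_le hK hk
    simp [hT, hz]
  have hTm : ∀ m k : ℕ, nL k ≤ m → T m k = 0 := by
    intro m k hm
    have hz := pow_apply_zero_of_le (hnL k) hm
    simp [hT, hz]
  -- rewrite RHS as a double sum of T
  have hIcc : ∑ j ∈ Finset.Icc 1 M, (A ^ j) f = ∑ k ∈ Finset.range M, (A ^ (k + 1)) f := by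
    rw [show Finset.Icc 1 M = Finset.Ico 1 (M + 1) from (Finset.Ico_add_one_right_eq_Icc 1 M).symm,
      Finset.sum_Ico_eq_sum_range]
    simp [add_comm]
  have hRHS : (∑ i ∈ Finset.range M, ((i.factorial : ℚ)⁻¹) •
        (D ^ i) (∑ j ∈ Finset.Icc 1 M, (A ^ j) f))
      = ∑ k ∈ Finset.range M, ∑ m ∈ Finset.range M, T m k := by
    rw [← Finset.sum_comm]
    refine Finset.sum_congr rfl fun i _ => ?_
    rw [hIcc, map_sum, Finset.smul_sum]
  -- rewrite LHS as a triangular double sum of T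
  have hc : ∀ i k : ℕ, k ≤ i →
      (i.factorial : ℚ)⁻¹ * ((i.choose k * k.factorial : ℕ) : ℚ)
        = ((i - k).factorial : ℚ)⁻¹ := by
    intro i k hk
    have hnat := Nat.choose_mul_factorial_mul_factorial hk
    have hq : ((i.choose k * k.factorial : ℕ) : ℚ) * (((i - k).factorial : ℕ) : ℚ)
        = ((i.factorial : ℕ) : ℚ) := by exact_mod_cast congrArg (Nat.cast : ℕ → ℚ) hnat
    have h1 : ((i.factorial : ℕ) : ℚ) ≠ 0 := Nat.cast_ne_zero.mpr i.factorial_ne_zero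
    have h2 : (((i - k).factorial : ℕ) : ℚ) ≠ 0 := Nat.cast_ne_zero.mpr (i - k).factorial_ne_zero
    field_simp
    push_cast at hq ⊢
    linear_combination hq
  have hLHS : A (∑ i ∈ Finset.range M, ((i.factorial : ℚ)⁻¹) • (D ^ i) f)
      = ∑ i ∈ Finset.range M, ∑ k ∈ Finset.range (i + 1), T (i - k) k := by
    rw [map_sum]
    refine Finset.sum_congr rfl fun i _ => ?_
    rw [map_smul, ← Module.End.mul_apply, aux2 h i, LinearMap.sum_apply, Finset.smul_sum]
    refine Finset.sum_congr rfl fun k hk => ?_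
    rw [Finset.mem_range] at hk
    rw [LinearMap.smul_apply, Module.End.mul_apply, smul_smul, hc i k (by omega)]
  -- triangle sum equals box sum
  have key : ∑ i ∈ Finset.range M, ∑ k ∈ Finset.range (i + 1), T (i - k) k
      = ∑ k ∈ Finset.range M, ∑ m ∈ Finset.range M, T m k := by
    have h1 := Finset.sum_Ico_Ico_comm 0 M (fun k i => T (i - k) k)
    have h2 : ∑ i ∈ Finset.range M, ∑ k ∈ Finset.range (i + 1), T (i - k) k
        = ∑ j ∈ Finset.Ico 0 M, ∑ i ∈ Finset.Ico 0 (j + 1), T (j - i) i := by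
      simp only [Finset.range_eq_Ico]
    rw [h2, ← h1, ← Finset.range_eq_Ico]
    refine Finset.sum_congr rfl fun k hk => ?_
    rw [Finset.mem_range] at hk
    rw [Finset.sum_Ico_eq_sum_range]
    have hsimp : ∀ m, T (k + m - k) k = T m k := by intro m; congr 1; omega
    rw [Finset.sum_congr rfl fun m _ => hsimp m]
    by_cases hkK : K ≤ k + 1 ∧ K ≤ k
    · rw [Finset.sum_eq_zero fun m _ => hTk m k hkK.1,
        Finset.sum_eq_zero fun m _ => hTk m k hkK.1]
    · have hkK' : k < K := by omega
      refine Finset.sum_subset (Finset.range_subset_range.mpr (by omega)) fun m hm hm' => ?_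
      rw [Finset.mem_range] at hm hm'
      have hLk : nL k ≤ L := Finset.le_sup (Finset.mem_range.mpr hkK')
      exact hTm m k (by omega)
  rw [hLHS, key, hRHS]
end
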